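/- For every convex body K ⊂ R^d there is a constant c depending only on d such that Vol K(u < 2^d) ≤ c · Vol K(u < 1), where K(u < t) = {x ∈ K : Vol(K ∩ (2x − K)) < t}. -/

import Mathlib

open MeasureTheory Set Filter
noncomputable section

/-- Euclidean space `ℝ^d`. -/
abbrev E (d : ℕ) := EuclideanSpace ℝ (Fin d)

/-- The integer lattice `ℤ^d` viewed inside `ℝ^d`. -/
def intPoints (d : ℕ) : Set (E d) := {v | ∀ i, ∃ z : ℤ, v i = z}

/-- The integer convex hull `I(K) = conv(ℤ^d ∩ K)`. -/
def integerHull (d : ℕ) (K : Set (E d)) : Set (E d) := convexHull ℝ (intPoints d ∩ K)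

/-- `f₀(P)`: the number of vertices (extreme points) of `P`. -/
def numVertices (d : ℕ) (P : Set (E d)) : ℕ := (Set.extremePoints ℝ P).ncard

/-- `u(x) = Vol(K ∩ (2x − K))`: the volume of the intersection of `K` with its point
reflection through `x`. -/
def uFun (d : ℕ) (K : Set (E d)) (x : E d) : ℝ :=
  (volume (K ∩ ((fun y => (2 : ℝ) • x - y) '' K))).toReal

set_option maxHeartbeats 2000000

open Metric Pointwise ENNReal

section Auxiliary

variable {d : ℕ}

local notation "⟪" x ", " y "⟫" => @inner ℝ _ _ x y

lemma finrankE (d : ℕ) : Module.finrank ℝ (E d) = d := by simp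

lemma norm_le_of_coords {v : E d} {c : ℝ} (hc : 0 ≤ c) (h : ∀ j, |v j| ≤ c) :
    ‖v‖ ≤ Real.sqrt d * c := by
  rw [EuclideanSpace.norm_eq]
  have : ∑ i, ‖v i‖ ^ 2 ≤ (d : ℝ) * c ^ 2 := by
    calc ∑ i, ‖v i‖ ^ 2 ≤ ∑ _i : Fin d, c ^ 2 := by
          apply Finset.sum_le_sum
          intro i _
          have := h i
          have : ‖v i‖ ≤ c := by rwa [Real.norm_eq_abs]
          nlinarith [norm_nonneg (v i)]
      _ = (d : ℝ) * c ^ 2 := by simp [mul_comm]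
  calc Real.sqrt (∑ i, ‖v i‖ ^ 2) ≤ Real.sqrt ((d:ℝ) * c ^ 2) := Real.sqrt_le_sqrt this
    _ = Real.sqrt d * c := by
        rw [Real.sqrt_mul (by positivity)]
        congr 1
        exact Real.sqrt_sq hc

lemma coord_le_norm (v : E d) (j : Fin d) : |v j| ≤ ‖v‖ := by
  rw [EuclideanSpace.norm_eq]
  have h1 : |v j| = Real.sqrt (‖v j‖ ^ 2) := by
    rw [Real.sqrt_sq_eq_abs, Real.norm_eq_abs, abs_abs]
  rw [h1]
  apply Real.sqrt_le_sqrt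
  exact Finset.single_le_sum (f := fun i => ‖v i‖ ^ 2) (fun i _ => by positivity) (Finset.mem_univ j)

def reflS (x : E d) (K : Set (E d)) : Set (E d) := (fun y => (2 : ℝ) • x - y) '' K

def LL (K : Set (E d)) (x : E d) : Set (E d) := K ∩ reflS x K

lemma uFun_eq (K : Set (E d)) (x : E d) : uFun d K x = (volume (LL K x)).toReal := rfl

lemma mem_reflS {x y : E d} {K : Set (E d)} : y ∈ reflS x K ↔ (2:ℝ) • x - y ∈ K := by
  constructor
  · rintro ⟨z, hz, rfl⟩
    have : (2:ℝ) • x - ((2:ℝ) • x - z) = z := by module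
    rwa [this]
  · intro h
    exact ⟨(2:ℝ) • x - y, h, by module⟩

lemma reflS_convex {x : E d} {K : Set (E d)} (hK : Convex ℝ K) : Convex ℝ (reflS x K) := by
  intro a ha b hb s t hs ht hst
  rw [mem_reflS] at *
  have : (2:ℝ) • x - (s • a + t • b) = s • ((2:ℝ) • x - a) + t • ((2:ℝ) • x - b) := by
    have h2 : (2:ℝ) • x = (s+t) • ((2:ℝ) • x) := by rw [hst, one_smul]
    rw [smul_sub, smul_sub]
    nth_rewrite 1 [h2]
    rw [add_smul]
    abel
  rw [this]
  exact hK ha hb hs ht hst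

lemma reflS_compact {x : E d} {K : Set (E d)} (hK : IsCompact K) : IsCompact (reflS x K) :=
  hK.image (by fun_prop)

lemma LL_convex {K : Set (E d)} (hK : Convex ℝ K) (x : E d) : Convex ℝ (LL K x) :=
  hK.inter (reflS_convex hK)

lemma LL_compact {K : Set (E d)} (hK : IsCompact K) (x : E d) : IsCompact (LL K x) :=
  hK.inter_right (reflS_compact hK).isClosed

lemma LL_subset {K : Set (E d)} (x : E d) : LL K x ⊆ K := Set.inter_subset_left

lemma finrankE' (d : ℕ) : Module.finrank ℝ (E d) = d := by simp

lemma vol_translate (a : E d) (T : Set (E d)) : volume ((fun z => a + z) '' T) = volume T := by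
  have h : (fun z => a + z) '' T = (fun z => -a + z) ⁻¹' T := by
    ext z
    constructor
    · rintro ⟨t, ht, rfl⟩
      simpa [Set.mem_preimage] using ht
    · intro h
      exact ⟨-a + z, h, by module⟩
  rw [h, measure_preimage_add]

lemma vol_smul (c : ℝ) (T : Set (E d)) :
    volume (c • T) = ENNReal.ofReal (|c| ^ d) * volume T := by
  rw [Measure.addHaar_smul, finrankE', abs_pow]

lemma support_vec {K : Set (E d)} (hKcv : Convex ℝ K) {p b : E d} {r : ℝ} (hr : 0 < r)
    (hball : closedBall p r ⊆ K) (hbc : b ∈ closure Kᶜ) :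
    ∃ m : E d, ‖m‖ = 1 ∧ (∀ y ∈ K, ⟪m, y⟫ ≤ ⟪m, b⟫) ∧ r ≤ ⟪m, b - p⟫ := by
  have hpint : p ∈ interior K := by
    rw [mem_interior]
    exact ⟨ball p r, (ball_subset_closedBall).trans hball, isOpen_ball, mem_ball_self hr⟩
  have hbint : b ∉ interior K := by
    intro h
    obtain ⟨z, hz1, hz2⟩ := mem_closure_iff.1 hbc (interior K) isOpen_interior h
    exact hz2 (interior_subset hz1)
  obtain ⟨f, hf⟩ := geometric_hahn_banach_open_point (hKcv.interior) isOpen_interior hbint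
  have hfp : f p < f b := hf p hpint
  have hfK : ∀ y ∈ K, f y ≤ f b := by
    intro y hy
    by_contra hcon
    push_neg at hcon
    have hyp : f p < f y := lt_trans hfp hcon
    set t : ℝ := (f y - f b) / (f y - f p) with ht
    have h1 : 0 < f y - f p := by linarith
    have htpos : 0 < t := div_pos (by linarith) h1
    have htlt : t < 1 := by
      rw [div_lt_one h1]; linarith
    have hmem : t • p + (1 - t) • y ∈ interior K :=
      hKcv.combo_interior_closure_mem_interior hpint (subset_closure hy) htpos
        (by linarith) (by ring)
    have := hf _ hmem
    simp only [map_add, ContinuousLinearMap.map_smul, smul_eq_mul] at this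
    have : t * (f p - f y) + f y < f b := by linarith
    rw [ht] at this
    rw [div_mul_eq_mul_div, div_add' _ _ _ (ne_of_gt h1)] at this
    rw [div_lt_iff₀ h1] at this
    nlinarith
  have hfne : f ≠ 0 := by
    intro h
    rw [h] at hfp
    simp at hfp
  set m₀ : E d := (InnerProductSpace.toDual ℝ (E d)).symm f with hm₀
  have hm₀app : ∀ y, ⟪m₀, y⟫ = f y := fun y => InnerProductSpace.toDual_symm_apply
  have hm₀norm : ‖m₀‖ = ‖f‖ := LinearIsometryEquiv.norm_map _ f
  have hm₀pos : 0 < ‖m₀‖ := by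
    rw [hm₀norm, norm_pos_iff]
    exact hfne
  refine ⟨‖m₀‖⁻¹ • m₀, ?_, ?_, ?_⟩
  · rw [norm_smul, norm_inv, norm_norm]
    field_simp
  · intro y hy
    rw [real_inner_smul_left, real_inner_smul_left, hm₀app, hm₀app]
    exact mul_le_mul_of_nonneg_left (hfK y hy) (by positivity)
  · have hyK : p + r • (‖m₀‖⁻¹ • m₀) ∈ K := by
      apply hball
      rw [mem_closedBall, dist_eq_norm]
      simp only [add_sub_cancel_left]
      rw [norm_smul, norm_smul, norm_inv, norm_norm, Real.norm_eq_abs, abs_of_pos hr]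
      field_simp
      exact le_rfl
    have h2 := hfK _ hyK
    rw [← hm₀app, ← hm₀app] at h2
    rw [inner_add_right, real_inner_smul_right, real_inner_smul_right,
        real_inner_self_eq_norm_sq] at h2
    have h3 : ⟪m₀, p⟫ + r * ‖m₀‖ ≤ ⟪m₀, b⟫ := by
      have : ‖m₀‖⁻¹ * (‖m₀‖^2) = ‖m₀‖ := by field_simp
      nlinarith
    rw [real_inner_smul_left, inner_sub_right]
    rw [le_inv_mul_iff₀ hm₀pos]
    nlinarith

lemma key_estimate {K : Set (E d)} (hKcv : Convex ℝ K) (hKcp : IsCompact K)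
    {p b x : E d} {r ε : ℝ} (hr : 0 < r) (hε : 0 < ε) (hε4 : ε ≤ 1/24)
    (hball : closedBall p r ⊆ K) (hbc : b ∈ closure Kᶜ)
    (hbp : ‖b - p‖ = r) (hxK : x ∈ K) (hxp : ‖x - p‖ ≤ r/8)
    (k : ℕ) (hk : ∀ j : ℕ, j < k → (j:ℝ) * ε ≤ 1) :
    (k : ℝ≥0∞) * ENNReal.ofReal ((6:ℝ)⁻¹ ^ d) * volume (LL K ((1-ε) • b + ε • x))
      ≤ volume (LL K x) := by
  have hbK : b ∈ K := hball (by rw [mem_closedBall, dist_eq_norm]; rw [hbp])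
  set q := (1-ε) • b + ε • x with hqdef
  obtain ⟨m, hm1, hmK, hmr⟩ := support_vec hKcv hr hball hbc
  set w := ε * ⟪m, b - x⟫ with hwdef
  have hw_ub : w ≤ ε * (9/8 * r) := by
    have h1 : ⟪m, b - x⟫ = ⟪m, b - p⟫ + ⟪m, p - x⟫ := by
      rw [← inner_add_right]
      congr 1
      abel
    have h2 : ⟪m, b - p⟫ ≤ r := by
      calc ⟪m, b - p⟫ ≤ ‖m‖ * ‖b - p‖ := real_inner_le_norm _ _
        _ = r := by rw [hm1, one_mul, hbp]
    have h3 : ⟪m, p - x⟫ ≤ r/8 := by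
      calc ⟪m, p - x⟫ ≤ ‖m‖ * ‖p - x‖ := real_inner_le_norm _ _
        _ ≤ r/8 := by rw [hm1, one_mul, norm_sub_rev]; exact hxp
    have := hε.le
    nlinarith
  have hbq : b - q = ε • (b - x) := by rw [hqdef]; module
  have hslab : ∀ y ∈ LL K q, |⟪m, y - q⟫| ≤ w := by
    intro y hy
    obtain ⟨hy1, hy2⟩ := hy
    rw [mem_reflS] at hy2
    have hup : ∀ z ∈ K, ⟪m, z - q⟫ ≤ w := by
      intro z hz
      have : ⟪m, z - q⟫ = ⟪m, z⟫ - ⟪m, q⟫ := inner_sub_right _ _ _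
      have hb' : ⟪m, b - q⟫ = ⟪m, b⟫ - ⟪m, q⟫ := inner_sub_right _ _ _
      have hw' : ⟪m, b - q⟫ = w := by rw [hbq, real_inner_smul_right, hwdef]
      have := hmK z hz
      linarith
    rw [abs_le]
    refine ⟨?_, hup y hy1⟩
    have h2 := hup _ hy2
    have h3 : ⟪m, (2:ℝ) • q - y - q⟫ = - ⟪m, y - q⟫ := by
      have h4 : (2:ℝ) • q - y - q = -(y - q) := by module
      rw [h4, inner_neg_right]
    linarith
  -- the segment vector e
  set e := (2⁻¹ : ℝ) • (b - p) with hedef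
  have hme : r / 2 ≤ ⟪m, e⟫ := by
    rw [hedef, real_inner_smul_right]
    linarith
  have hxeK : ∀ s : ℝ, |s| ≤ 1 → x + s • e ∈ K := by
    intro s hs
    apply hball
    rw [mem_closedBall, dist_eq_norm]
    have h1 : x + s • e - p = (x - p) + s • e := by abel
    rw [h1]
    calc ‖(x - p) + s • e‖ ≤ ‖x - p‖ + ‖s • e‖ := norm_add_le _ _
      _ ≤ r/8 + r/2 := by
          apply add_le_add hxp
          rw [hedef, norm_smul, norm_smul]
          simp only [Real.norm_eq_abs, hbp]
          rw [abs_of_pos (by norm_num : (0:ℝ) < 2⁻¹)]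
          nlinarith [abs_nonneg s, hr]
      _ ≤ r := by linarith
  have hxeLL : ∀ s : ℝ, |s| ≤ 1 → x + s • e ∈ LL K x := by
    intro s hs
    refine ⟨hxeK s hs, ?_⟩
    rw [mem_reflS]
    have h1 : (2:ℝ) • x - (x + s • e) = x + (-s) • e := by module
    rw [h1]
    exact hxeK (-s) (by rwa [abs_neg])
  -- the point v
  have hvK : x + ((1-ε)/2) • (x - b) ∈ K := by
    apply hball
    rw [mem_closedBall, dist_eq_norm]
    have h1 : x + ((1-ε)/2) • (x - b) - p
        = (1 + (1-ε)/2) • (x - p) + ((1-ε)/2) • (p - b) := by module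
    rw [h1]
    have hb1 : (0:ℝ) ≤ (1-ε)/2 := by linarith
    have hb2 : (1-ε)/2 ≤ 1/2 := by linarith
    calc ‖(1 + (1-ε)/2) • (x - p) + ((1-ε)/2) • (p - b)‖
        ≤ ‖(1 + (1-ε)/2) • (x - p)‖ + ‖((1-ε)/2) • (p - b)‖ := norm_add_le _ _
      _ ≤ (3/2) * (r/8) + (1/2) * r := by
          rw [norm_smul, norm_smul, Real.norm_eq_abs, Real.norm_eq_abs,
            abs_of_pos (by linarith), abs_of_nonneg hb1]
          have hb' : ‖p - b‖ = r := by rw [norm_sub_rev]; exact hbp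
          rw [hb']
          nlinarith [norm_nonneg (x - p), hxp, hε.le]
      _ ≤ r := by linarith
  -- main inclusion
  have hinc : ∀ y ∈ K, x + (3⁻¹ : ℝ) • (y - q) ∈ K := by
    intro y hy
    have heq : x + (3⁻¹ : ℝ) • (y - q)
        = (3⁻¹ : ℝ) • y + (1 - 3⁻¹ : ℝ) • (x + ((1-ε)/2) • (x - b)) := by
      rw [hqdef]
      match_scalars <;> ring
    rw [heq]
    exact hKcv hy hvK (by norm_num) (by norm_num) (by norm_num)
  have hincLL : ∀ y ∈ LL K q, x + (3⁻¹ : ℝ) • (y - q) ∈ LL K x := by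
    intro y hy
    obtain ⟨hy1, hy2⟩ := hy
    rw [mem_reflS] at hy2
    refine ⟨hinc y hy1, ?_⟩
    rw [mem_reflS]
    have h1 : (2:ℝ) • x - (x + (3⁻¹ : ℝ) • (y - q)) = x + (3⁻¹ : ℝ) • (((2:ℝ) • q - y) - q) := by
      module
    rw [h1]
    exact hinc _ hy2
  -- the disjoint translates
  set lam : ℕ → ℝ := fun j => j * ε - 2⁻¹ with hlam
  set C : ℕ → Set (E d) :=
    fun j => (fun y => (x + lam j • e) + (6⁻¹:ℝ) • (y - q)) '' (LL K q) with hCdef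
  have hlam_range : ∀ j, j < k → |lam j| ≤ 2⁻¹ := by
    intro j hj
    rw [hlam, abs_le]
    have h0 : (0:ℝ) ≤ (j:ℝ) * ε := by positivity
    have h1 := hk j hj
    constructor <;> simp only <;> linarith
  have hCsub : ∀ j, j < k → C j ⊆ LL K x := by
    intro j hj z hz
    obtain ⟨y, hy, rfl⟩ := hz
    show x + lam j • e + 6⁻¹ • (y - q) ∈ LL K x
    have heq : (x + lam j • e) + (6⁻¹:ℝ) • (y - q)
        = (2⁻¹:ℝ) • (x + (3⁻¹ : ℝ) • (y - q)) + (2⁻¹:ℝ) • (x + (2 * lam j) • e) := by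
      match_scalars <;> ring
    rw [heq]
    apply LL_convex hKcv x (hincLL y hy) (hxeLL (2 * lam j) ?_) (by norm_num) (by norm_num)
      (by norm_num)
    have := hlam_range j hj
    rw [abs_mul]
    rw [abs_of_pos (by norm_num : (0:ℝ) < 2)]
    linarith [abs_nonneg (lam j)]
  have hLLq_cp : IsCompact (LL K q) := LL_compact hKcp q
  have hCvol : ∀ j, volume (C j) = ENNReal.ofReal ((6:ℝ)⁻¹ ^ d) * volume (LL K q) := by
    intro j
    have h1 : C j = (fun z => (x + lam j • e - (6⁻¹:ℝ) • q) + z) '' (((6⁻¹:ℝ)) • (LL K q)) := by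
      rw [hCdef]
      simp only
      rw [← Set.image_smul, ← Set.image_comp]
      apply Set.image_congr
      intro y _
      simp only [Function.comp_apply]
      module
    rw [h1, vol_translate, vol_smul]
    congr 2
    rw [abs_of_pos]
    norm_num
  have hCmeas : ∀ j, MeasurableSet (C j) := by
    intro j
    apply IsCompact.measurableSet
    apply hLLq_cp.image
    fun_prop
  have hCdisj : (↑(Finset.range k) : Set ℕ).PairwiseDisjoint C := by
    intro i hi j hj hij
    simp only [Finset.coe_range, Set.mem_Iio] at hi hj
    rw [Function.onFun, Set.disjoint_left]
    rintro z ⟨ya, hya, hza⟩ ⟨yb, hyb, hzb⟩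
    have heq : (x + lam i • e) + (6⁻¹:ℝ) • (ya - q) = (x + lam j • e) + (6⁻¹:ℝ) • (yb - q) := by
      have h := hza.trans hzb.symm
      simpa using h
    have hinner := congrArg (fun z => ⟪m, z⟫) heq
    simp only [inner_add_right, real_inner_smul_right] at hinner
    have hsa := hslab ya hya
    have hsb := hslab yb hyb
    rw [abs_le] at hsa hsb
    have hij' : (1:ℝ) ≤ |(i:ℝ) - (j:ℝ)| := by
      rcases lt_or_gt_of_ne hij with h | h
      · rw [abs_sub_comm, le_abs]
        left
        have : (i:ℝ) + 1 ≤ (j:ℝ) := by exact_mod_cast Nat.succ_le_of_lt h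
        linarith
      · rw [le_abs]
        left
        have : (j:ℝ) + 1 ≤ (i:ℝ) := by exact_mod_cast Nat.succ_le_of_lt h
        linarith
    have hlamdiff : |lam i - lam j| = |(i:ℝ) - (j:ℝ)| * ε := by
      have h9 : lam i - lam j = ((i:ℝ) - (j:ℝ)) * ε := by rw [hlam]; ring
      rw [h9, abs_mul, abs_of_pos hε]
    have hE : ε * (r/2) ≤ |lam i - lam j| * ⟪m, e⟫ := by
      rw [hlamdiff]
      have h0 : 0 ≤ ⟪m, e⟫ := le_trans (by linarith) hme
      have : ε * (r/2) ≤ (|(i:ℝ) - (j:ℝ)| * ε) * (r/2) := by nlinarith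
      apply le_trans this
      apply mul_le_mul_of_nonneg_left hme
      positivity
    -- from hinner : ⟪m,x⟫ + lam i * ⟪m,e⟫ + 6⁻¹ * ⟪m,ya-q⟫ = ⟪m,x⟫ + lam j *⟪m,e⟫ + 6⁻¹ *⟪m,yb-q⟫
    have habs : |lam i - lam j| * ⟪m, e⟫ ≤ w / 3 := by
      have h5 : (lam i - lam j) * ⟪m, e⟫ = 6⁻¹ * ⟪m, yb - q⟫ - 6⁻¹ * ⟪m, ya - q⟫ := by
        linarith [hinner]
      have h6 : |(lam i - lam j) * ⟪m, e⟫| ≤ w / 3 := by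
        rw [h5]
        rw [abs_le]
        constructor <;> linarith
      calc |lam i - lam j| * ⟪m, e⟫ = |lam i - lam j| * |⟪m, e⟫| := by
            rw [abs_of_nonneg (le_trans (by linarith) hme)]
        _ = |(lam i - lam j) * ⟪m, e⟫| := (abs_mul _ _).symm
        _ ≤ w / 3 := h6
    nlinarith
  -- put it together
  have hsum := measure_biUnion_finset (μ := volume) hCdisj (fun j _ => hCmeas j)
  have hunion : ⋃ j ∈ Finset.range k, C j ⊆ LL K x := by
    intro z hz
    simp only [Set.mem_iUnion, Finset.mem_range] at hz
    obtain ⟨j, hj, hzj⟩ := hz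
    exact hCsub j hj hzj
  calc (k : ℝ≥0∞) * ENNReal.ofReal ((6:ℝ)⁻¹ ^ d) * volume (LL K q)
      = ∑ j ∈ Finset.range k, volume (C j) := by
        rw [Finset.sum_congr rfl (fun j _ => hCvol j)]
        rw [Finset.sum_const, Finset.card_range, nsmul_eq_mul, mul_assoc]
    _ = volume (⋃ j ∈ Finset.range k, C j) := hsum.symm
    _ ≤ volume (LL K x) := measure_mono hunion


/-- The contraction ratio. -/
def epsd (d : ℕ) : ℝ := (2 * 12^d : ℝ)⁻¹

lemma epsd_pos : 0 < epsd d := by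
  rw [epsd]; positivity

lemma epsd_le (hd : 1 ≤ d) : epsd d ≤ 1/24 := by
  rw [epsd]
  rw [show (1:ℝ)/24 = (24:ℝ)⁻¹ by norm_num]
  apply inv_anti₀ (by norm_num)
  have : (12:ℝ)^1 ≤ 12^d := pow_le_pow_right₀ (by norm_num) hd
  simpa using by linarith

lemma epsd_lt_one : epsd d < 1 := by
  rw [epsd]
  rw [inv_lt_one_iff₀]
  right
  have : (1:ℝ) ≤ 12^d := one_le_pow₀ (by norm_num)
  linarith

lemma key_u (hd : 1 ≤ d) {K : Set (E d)} (hKcv : Convex ℝ K) (hKcp : IsCompact K)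
    {p b x : E d} {r : ℝ} (hr : 0 < r)
    (hball : closedBall p r ⊆ K) (hbc : b ∈ closure Kᶜ)
    (hbp : ‖b - p‖ = r) (hxK : x ∈ K) (hxp : ‖x - p‖ ≤ r/8)
    (hu : uFun d K x < 2^d) :
    uFun d K ((1 - epsd d) • b + epsd d • x) < 1 := by
  set ε := epsd d with hεdef
  set k : ℕ := 2 * 12^d + 1 with hkdef
  have hk : ∀ j : ℕ, j < k → (j:ℝ) * ε ≤ 1 := by
    intro j hj
    have hj' : (j : ℝ) ≤ 2 * 12^d := by
      have : j ≤ 2 * 12^d := by omega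
      exact_mod_cast this
    rw [hεdef, epsd]
    rw [← le_div_iff₀ (by positivity)]
    simpa using hj'
  have hkey := key_estimate hKcv hKcp hr epsd_pos (epsd_le hd) hball hbc hbp hxK hxp k hk
  have hfin : volume (LL K x) ≠ ⊤ := by
    apply ne_of_lt
    apply lt_of_le_of_lt (measure_mono (Set.inter_subset_left))
    exact hKcp.measure_lt_top
  have hfinq : volume (LL K ((1-ε) • b + ε • x)) ≠ ⊤ := by
    apply ne_of_lt
    apply lt_of_le_of_lt (measure_mono (Set.inter_subset_left))
    exact hKcp.measure_lt_top
  have hreal : (k:ℝ) * ((6:ℝ)⁻¹ ^ d) * uFun d K ((1-ε) • b + ε • x) ≤ uFun d K x := by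
    rw [uFun_eq, uFun_eq]
    have h1 := ENNReal.toReal_mono hfin hkey
    rw [ENNReal.toReal_mul, ENNReal.toReal_mul, ENNReal.toReal_natCast,
      ENNReal.toReal_ofReal (by positivity)] at h1
    exact h1
  have hpow : ((6:ℝ)⁻¹)^d * 12^d = 2^d := by
    rw [← mul_pow]
    norm_num
  have hX0 : 0 ≤ uFun d K ((1-ε) • b + ε • x) := by
    rw [uFun_eq]; exact ENNReal.toReal_nonneg
  have hk' : (k:ℝ) = 2 * 12^d + 1 := by
    rw [hkdef]; push_cast; ring
  by_contra hcon
  push_neg at hcon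
  have h3 : (k:ℝ) * 6⁻¹^d * 1 ≤ (k:ℝ) * 6⁻¹^d * uFun d K ((1 - ε) • b + ε • x) :=
    mul_le_mul_of_nonneg_left hcon (by positivity)
  have h4 : (k:ℝ) * 6⁻¹ ^ d = 2 * 2 ^ d + 6⁻¹ ^ d := by rw [hk', ← hpow]; ring
  have h5 := pow_pos (show (0:ℝ) < 2 by norm_num) d
  have h6 := pow_pos (show (0:ℝ) < (6:ℝ)⁻¹ by norm_num) d
  nlinarith

lemma rpos_of_interior {K : Set (E d)} {p : E d} (hp : p ∈ interior K) (hc : Kᶜ.Nonempty) :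
    0 < infDist p Kᶜ := by
  obtain ⟨ρ, hρ, hball⟩ := Metric.isOpen_iff.1 isOpen_interior p hp
  rw [← infDist_closure, closure_compl]
  apply (isClosed_compl_iff.2 isOpen_interior).notMem_iff_infDist_pos ?_ |>.1 (by simpa using hp)
  obtain ⟨y, hy⟩ := hc
  exact ⟨y, fun hcon => hy (interior_subset hcon)⟩

lemma closedBall_infDist_subset {K : Set (E d)} (hKcl : IsClosed K) {p : E d} (hp : p ∈ K)
    (hc : Kᶜ.Nonempty) : closedBall p (infDist p Kᶜ) ⊆ K := by
  set r := infDist p Kᶜ with hrdef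
  have hr0 : 0 ≤ r := infDist_nonneg
  intro y hy
  by_contra hyK
  have hyc : y ∈ Kᶜ := hyK
  have hD : dist p y = r := by
    have h1 : r ≤ dist p y := infDist_le_dist_of_mem hyc
    have h2 : dist p y ≤ r := by rwa [mem_closedBall, dist_comm] at hy
    linarith
  have hrpos : 0 < r := by
    rcases lt_or_eq_of_le hr0 with h | h
    · exact h
    · exfalso
      have : dist p y = 0 := by rw [hD, ← h]
      rw [dist_eq_zero] at this
      exact hyK (this ▸ hp)
  obtain ⟨η, hη, hball⟩ := Metric.isOpen_iff.1 (hKcl.isOpen_compl) y hyc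
  set c := min (η / (2 * r)) (1/2) with hcdef
  have hc0 : 0 < c := by
    apply lt_min
    · positivity
    · norm_num
  have hc1 : c ≤ 1/2 := min_le_right _ _
  set y' := y + c • (p - y) with hy'def
  have hdyy' : dist y' y = c * r := by
    rw [dist_eq_norm, hy'def]
    have : y + c • (p - y) - y = c • (p - y) := by abel
    rw [this, norm_smul, Real.norm_eq_abs, abs_of_pos hc0, ← dist_eq_norm, hD]
  have hy'c : y' ∈ Kᶜ := by
    apply hball
    rw [mem_ball, hdyy']
    calc c * r ≤ (η / (2 * r)) * r := by
          apply mul_le_mul_of_nonneg_right (min_le_left _ _) hrpos.le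
      _ = η / 2 := by field_simp
      _ < η := by linarith
  have hdpy' : dist p y' = (1 - c) * r := by
    rw [dist_eq_norm, hy'def]
    have : p - (y + c • (p - y)) = (1 - c) • (p - y) := by module
    rw [this, norm_smul, Real.norm_eq_abs, abs_of_pos (by linarith), ← dist_eq_norm, hD]
  have h8 : infDist p Kᶜ ≤ dist p y' := infDist_le_dist_of_mem hy'c
  rw [hdpy'] at h8
  nlinarith

lemma exists_nearest {K : Set (E d)} (hKcl : IsClosed K) {p : E d} (hp : p ∈ K)
    (hc : Kᶜ.Nonempty) :
    ∃ b : E d, b ∈ closure Kᶜ ∧ ‖b - p‖ = infDist p Kᶜ := by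
  have hcc : (closure Kᶜ).Nonempty := hc.closure
  obtain ⟨b, hb1, hb2⟩ := isClosed_closure.exists_infDist_eq_dist hcc p
  rw [infDist_closure] at hb2
  exact ⟨b, hb1, by rw [← dist_eq_norm, dist_comm, ← hb2]⟩

lemma piece_y_bound {K : Set (E d)} (hKcl : IsClosed K) (hKcv : Convex ℝ K) (hc : Kᶜ.Nonempty)
    {ε : ℝ} (hε : 0 < ε) (hε1 : ε < 1) {p b y : E d} {t : ℝ} (hpK : p ∈ K)
    (hb : b ∈ closure Kᶜ) (hbp : ‖b - p‖ = infDist p Kᶜ) (ht : 0 < t)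
    (hr1 : t ≤ infDist p Kᶜ) (hr2 : infDist p Kᶜ < 2*t)
    (hy : dist y ((1-ε) • b + ε • p) ≤ ε*t/8) :
    7/8*(ε*t) ≤ infDist y Kᶜ ∧ infDist y Kᶜ ≤ 17/8*(ε*t) := by
  set rb := infDist p Kᶜ with hrb
  set cc := (1-ε) • b + ε • p with hcc
  have hrbpos : 0 < rb := lt_of_lt_of_le ht hr1
  have hbK : b ∈ K := by
    apply closedBall_infDist_subset hKcl hpK hc
    rw [mem_closedBall, dist_eq_norm, hbp]
  have h1 : infDist cc Kᶜ ≤ ε * rb := by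
    have hb0 : infDist b Kᶜ = 0 := by
      rw [← infDist_closure]
      exact infDist_zero_of_mem hb
    have htri : infDist cc Kᶜ ≤ infDist b Kᶜ + dist cc b := infDist_le_infDist_add_dist
    have hccb : dist cc b = ε * rb := by
      rw [dist_eq_norm]
      have h2 : cc - b = ε • (p - b) := by rw [hcc]; module
      rw [h2, norm_smul, Real.norm_eq_abs, abs_of_pos hε, norm_sub_rev, hbp]
    rw [hb0, hccb, zero_add] at htri
    exact htri
  have h2 : ε * rb ≤ infDist cc Kᶜ := by
    by_contra hcon
    push_neg at hcon
    obtain ⟨w, hw, hww⟩ := (infDist_lt_iff hc).1 hcon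
    have hwK : w ∈ K := by
      have hmem : p + ε⁻¹ • (w - cc) ∈ K := by
        apply closedBall_infDist_subset hKcl hpK hc
        rw [mem_closedBall, dist_eq_norm]
        have h3 : p + ε⁻¹ • (w - cc) - p = ε⁻¹ • (w - cc) := by abel
        rw [h3, norm_smul, Real.norm_eq_abs, abs_of_pos (by positivity), ← dist_eq_norm,
          dist_comm, dist_comm w cc] at *
        calc ε⁻¹ * dist cc w ≤ ε⁻¹ * (ε * rb) := by
              apply mul_le_mul_of_nonneg_left hww.le (by positivity)
          _ = rb := by field_simp
      have heq : w = (1-ε) • b + ε • (p + ε⁻¹ • (w - cc)) := by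
        rw [hcc]
        match_scalars <;> field_simp <;> ring
      rw [heq]
      exact hKcv hbK hmem (by linarith) hε.le (by ring)
    exact hw hwK
  have h3 : infDist y Kᶜ ≤ infDist cc Kᶜ + dist y cc := infDist_le_infDist_add_dist
  have h4 : infDist cc Kᶜ ≤ infDist y Kᶜ + dist cc y := infDist_le_infDist_add_dist
  rw [dist_comm] at h4
  constructor
  · nlinarith
  · nlinarith

lemma pieces_close {K : Set (E d)} {ε : ℝ} (hε : 0 < ε) (hε' : ε ≤ 1/24)
    {p b p₀ b₀ y : E d} {t t₀ : ℝ} (ht : 0 < t) (ht₀ : 0 < t₀)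
    (hbp : ‖b - p‖ = infDist p Kᶜ) (hbp₀ : ‖b₀ - p₀‖ = infDist p₀ Kᶜ)
    (hr2 : infDist p Kᶜ < 2*t) (hr2₀ : infDist p₀ Kᶜ < 2*t₀)
    (hy : dist y ((1-ε) • b + ε • p) ≤ ε*t/8)
    (hy₀ : dist y ((1-ε) • b₀ + ε • p₀) ≤ ε*t₀/8)
    (htt0 : t ≤ 2*t₀) : ‖p - p₀‖ ≤ 14*t₀ := by
  set cc := (1-ε) • b + ε • p with hcc
  set cc₀ := (1-ε) • b₀ + ε • p₀ with hcc₀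
  have hccd : dist cc cc₀ ≤ ε*t/8 + ε*t₀/8 := by
    calc dist cc cc₀ ≤ dist cc y + dist y cc₀ := dist_triangle _ _ _
      _ ≤ ε*t/8 + ε*t₀/8 := add_le_add (by rw [dist_comm]; exact hy) hy₀
  have hvec : (1-ε) • (b - b₀) = (cc - cc₀) - ε • (p - p₀) := by
    rw [hcc, hcc₀]; module
  have n1 : (1-ε) * ‖b - b₀‖ ≤ dist cc cc₀ + ε * ‖p - p₀‖ := by
    have h5 : ‖(1-ε) • (b - b₀)‖ = (1-ε) * ‖b - b₀‖ := by
      rw [norm_smul, Real.norm_eq_abs, abs_of_pos (by linarith)]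
    rw [← h5, hvec]
    calc ‖(cc - cc₀) - ε • (p - p₀)‖ ≤ ‖cc - cc₀‖ + ‖ε • (p - p₀)‖ := norm_sub_le _ _
      _ = dist cc cc₀ + ε * ‖p - p₀‖ := by
          rw [dist_eq_norm, norm_smul, Real.norm_eq_abs, abs_of_pos hε]
  have n2 : ‖p - p₀‖ ≤ ‖b - b₀‖ + ‖b - p‖ + ‖b₀ - p₀‖ := by
    have h6 : p - p₀ = (p - b) + (b - b₀) + (b₀ - p₀) := by abel
    rw [h6]
    calc ‖(p - b) + (b - b₀) + (b₀ - p₀)‖ ≤ ‖(p - b) + (b - b₀)‖ + ‖b₀ - p₀‖ := norm_add_le _ _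
      _ ≤ ‖p - b‖ + ‖b - b₀‖ + ‖b₀ - p₀‖ := by
          have := norm_add_le (p - b) (b - b₀)
          linarith
      _ = ‖b - b₀‖ + ‖b - p‖ + ‖b₀ - p₀‖ := by rw [norm_sub_rev p b]; ring
  have hb1 : ‖b - p‖ < 2*t := by rw [hbp]; exact hr2
  have hb2 : ‖b₀ - p₀‖ < 2*t₀ := by rw [hbp₀]; exact hr2₀
  have hnn : 0 ≤ ‖p - p₀‖ := norm_nonneg _
  have hnnb : 0 ≤ ‖b - b₀‖ := norm_nonneg _
  nlinarith

lemma abs_sub_lt_one_of_floor_eq {a b : ℝ} (h : ⌊a⌋ = ⌊b⌋) : |a - b| < 1 := by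
  have h1 := Int.floor_le a
  have h2 := Int.lt_floor_add_one a
  have h3 := Int.floor_le b
  have h4 := Int.lt_floor_add_one b
  rw [h] at h1 h2
  rw [abs_sub_lt_iff]
  constructor <;> linarith

lemma compl_nonempty (hd : 1 ≤ d) {K : Set (E d)} (hKcp : IsCompact K) : Kᶜ.Nonempty := by
  obtain ⟨R, hR⟩ := hKcp.isBounded.subset_closedBall 0
  have : Fin d := ⟨0, by omega⟩
  refine ⟨EuclideanSpace.single this (|R| + 1), fun hmem => ?_⟩
  have h2 := hR hmem
  rw [mem_closedBall, dist_zero_right, EuclideanSpace.norm_single] at h2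
  rw [Real.norm_eq_abs, abs_of_pos (by positivity)] at h2
  have := abs_nonneg R
  have := le_abs_self R
  linarith

lemma sqrtd_le (hd : 1 ≤ d) : Real.sqrt d ≤ d := by
  have h1 : (1:ℝ) ≤ d := by exact_mod_cast hd
  have := Real.sqrt_le_sqrt (show (d:ℝ) ≤ d^2 by nlinarith)
  rwa [Real.sqrt_sq (by positivity)] at this

lemma globalBound (hd : 1 ≤ d) {K : Set (E d)} (hKcp : IsCompact K) (hKcv : Convex ℝ K)
    (hKint : (interior K).Nonempty) :
    ENNReal.ofReal ((epsd d)^d) * volume {x ∈ K | uFun d K x < 2^d} ≤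
      ((3 * (448*d+1)^d : ℕ) : ℝ≥0∞) * volume {x ∈ K | uFun d K x < 1} := by
  classical
  have hKne : Kᶜ.Nonempty := compl_nonempty hd hKcp
  set ε := epsd d with hεdef
  have hε : 0 < ε := epsd_pos
  have hε1 : ε < 1 := epsd_lt_one
  have hε' : ε ≤ 1/24 := epsd_le hd
  set A := {x ∈ K | uFun d K x < 2^d} with hA
  set B := {x ∈ K | uFun d K x < 1} with hB
  set Bh := toMeasurable volume B with hBh
  have hBhm : MeasurableSet Bh := measurableSet_toMeasurable _ _
  have hBhvol : volume Bh = volume B := measure_toMeasurable _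
  have hBsub : B ⊆ Bh := subset_toMeasurable _ _
  set rr : E d → ℝ := fun x => infDist x Kᶜ with hrr
  set δfun : ℤ → ℝ := fun n => (2:ℝ)^n / (8*d) with hδ
  have hδpos : ∀ n : ℤ, 0 < δfun n := by
    intro n
    rw [hδ]
    have : (0:ℝ) < (2:ℝ)^n := zpow_pos (by norm_num) n
    have hd' : (0:ℝ) < d := by exact_mod_cast hd
    positivity
  set P : ℤ × (Fin d → ℤ) → Set (E d) := fun i =>
    {x | x ∈ A ∧ x ∈ interior K ∧ (2:ℝ)^i.1 ≤ rr x ∧ rr x < 2*(2:ℝ)^i.1 ∧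
      ∀ j, ⌊x j / δfun i.1⌋ = i.2 j} with hP
  -- covering
  have hcov : A ∩ interior K ⊆ ⋃ i, P i := by
    rintro x ⟨hxA, hxint⟩
    have hrx : 0 < rr x := rpos_of_interior hxint hKne
    set n := Int.log 2 (rr x) with hn
    have e1 : (2:ℝ)^n ≤ rr x := by
      exact_mod_cast Int.zpow_log_le_self (b := 2) (by norm_num) hrx
    have e2 : rr x < 2*(2:ℝ)^n := by
      have h := Int.lt_zpow_succ_log_self (b := 2) (by norm_num) (rr x)
      have h2 : ((2:ℕ):ℝ) ^ (Int.log 2 (rr x) + 1) = 2 * (2:ℝ)^n := by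
        push_cast
        rw [zpow_add_one₀ (by norm_num : (2:ℝ) ≠ 0)]
        ring
      rw [h2] at h
      exact h
    exact Set.mem_iUnion.2 ⟨(n, fun j => ⌊x j / δfun n⌋), hxA, hxint, e1, e2, fun j => rfl⟩
  -- choice of piece data
  have hch : ∀ i, ∃ pb : E d × E d, (P i).Nonempty →
      (pb.1 ∈ P i ∧ pb.2 ∈ closure Kᶜ ∧ ‖pb.2 - pb.1‖ = rr pb.1) := by
    intro i
    by_cases h : (P i).Nonempty
    · obtain ⟨p, hp⟩ := h
      have hpK : p ∈ K := hp.1.1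
      obtain ⟨b, hb1, hb2⟩ := exists_nearest hKcp.isClosed hpK hKne
      exact ⟨(p, b), fun _ => ⟨hp, hb1, hb2⟩⟩
    · exact ⟨(0, 0), fun h' => absurd h' h⟩
  choose pb hpb using hch
  set pp : ℤ × (Fin d → ℤ) → E d := fun i => (pb i).1 with hpp
  set bb : ℤ × (Fin d → ℤ) → E d := fun i => (pb i).2 with hbb
  set cc : ℤ × (Fin d → ℤ) → E d := fun i => (1-ε) • bb i + ε • pp i with hcc
  set D : ℤ × (Fin d → ℤ) → Set (E d) := fun i =>
    if (P i).Nonempty then closedBall (cc i) (ε*(2:ℝ)^i.1/8) else ∅ with hD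
  have hDmeas : ∀ i, MeasurableSet (D i) := by
    intro i
    by_cases h : (P i).Nonempty
    · have : D i = closedBall (cc i) (ε*(2:ℝ)^i.1/8) := by rw [hD]; exact if_pos h
      rw [this]
      exact measurableSet_closedBall
    · have : D i = ∅ := by rw [hD]; exact if_neg h
      rw [this]
      exact MeasurableSet.empty
  -- basic piece facts
  have hpfacts : ∀ i, ∀ x ∈ P i, x ∈ K ∧ uFun d K x < 2^d ∧
      ‖x - pp i‖ ≤ (2:ℝ)^i.1/8 := by
    intro i x hx
    obtain ⟨hxA, hxint, hxr1, hxr2, hxfl⟩ := hx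
    have hne : (P i).Nonempty := ⟨x, hxA, hxint, hxr1, hxr2, hxfl⟩
    obtain ⟨hpP, hbcl, hbnorm⟩ := hpb i hne
    obtain ⟨hpA, hpint, hpr1, hpr2, hpfl⟩ := hpP
    refine ⟨hxA.1, hxA.2, ?_⟩
    set t := (2:ℝ)^i.1 with ht
    have htpos : 0 < t := zpow_pos (by norm_num) _
    have hcoord : ∀ j, |(x - pp i) j| ≤ δfun i.1 := by
      intro j
      have h1 : ⌊x j / δfun i.1⌋ = ⌊(pp i) j / δfun i.1⌋ := by rw [hxfl j, hpfl j]
      have h2 := abs_sub_lt_one_of_floor_eq h1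
      have h3 : x j / δfun i.1 - (pp i) j / δfun i.1 = (x j - (pp i) j) / δfun i.1 := by ring
      rw [h3, abs_div, abs_of_pos (hδpos i.1), div_lt_one (hδpos i.1)] at h2
      have h4 : (x - pp i) j = x j - (pp i) j := rfl
      rw [h4]
      exact h2.le
    have h5 : ‖x - pp i‖ ≤ Real.sqrt d * δfun i.1 := norm_le_of_coords (hδpos i.1).le hcoord
    have h6 : Real.sqrt d * δfun i.1 ≤ t/8 := by
      have hδval : δfun i.1 = t / (8*(d:ℝ)) := rfl
      have hd' : (0:ℝ) < d := by exact_mod_cast hd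
      rw [hδval]
      have h8 : Real.sqrt ↑d * (t/(8*↑d)) ≤ ↑d * (t/(8*↑d)) :=
        mul_le_mul_of_nonneg_right (sqrtd_le hd) (by positivity)
      calc Real.sqrt ↑d * (t/(8*↑d)) ≤ ↑d * (t/(8*↑d)) := h8
        _ = t/8 := by field_simp
    linarith
  -- image of a piece
  have himg : ∀ i, ((fun x => (1-ε) • bb i + ε • x) '' P i) ⊆ Bh ∩ D i := by
    rintro i z ⟨x, hx, rfl⟩
    have hne : (P i).Nonempty := ⟨x, hx⟩
    obtain ⟨hpP, hbcl, hbnorm⟩ := hpb i hne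
    obtain ⟨hpA, hpint, hpr1, hpr2, hpfl⟩ := hpP
    obtain ⟨hxK, hxu, hxnear⟩ := hpfacts i x hx
    set t := (2:ℝ)^i.1 with ht
    have htpos : 0 < t := zpow_pos (by norm_num) _
    have hrbpos : 0 < rr (pp i) := lt_of_lt_of_le htpos hpr1
    have hball : closedBall (pp i) (rr (pp i)) ⊆ K :=
      closedBall_infDist_subset hKcp.isClosed hpA.1 hKne
    have hxp : ‖x - pp i‖ ≤ rr (pp i)/8 := by
      calc ‖x - pp i‖ ≤ t/8 := hxnear
        _ ≤ rr (pp i)/8 := by linarith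
    have hu1 : uFun d K ((1 - ε) • bb i + ε • x) < 1 :=
      key_u hd hKcv hKcp hrbpos hball hbcl hbnorm hxK hxp hxu
    have hbK : bb i ∈ K := by
      apply hball
      rw [mem_closedBall, dist_eq_norm, hbnorm]
    have hTK : (1 - ε) • bb i + ε • x ∈ K := hKcv hbK hxK (by linarith) hε.le (by ring)
    constructor
    · exact hBsub ⟨hTK, hu1⟩
    · rw [hD]
      simp only [if_pos hne]
      rw [mem_closedBall, dist_eq_norm]
      have h1 : (1 - ε) • bb i + ε • x - cc i = ε • (x - pp i) := by
        rw [hcc]; module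
      rw [h1, norm_smul, Real.norm_eq_abs, abs_of_pos hε]
      calc ε * ‖x - pp i‖ ≤ ε * (t/8) := by
            apply mul_le_mul_of_nonneg_left hxnear hε.le
        _ = ε * t / 8 := by ring
  -- volume of image
  have hvol : ∀ i, volume ((fun x => (1-ε) • bb i + ε • x) '' P i)
      = ENNReal.ofReal (ε^d) * volume (P i) := by
    intro i
    have h1 : ((fun x => (1-ε) • bb i + ε • x) '' P i)
        = (fun z => (1-ε) • bb i + z) '' (ε • P i) := by
      rw [← Set.image_smul, ← Set.image_comp]
      rfl
    rw [h1, vol_translate, vol_smul, abs_of_pos hε]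
  -- multiplicity bound
  set M : ℕ := 3 * (448*d+1)^d with hM
  have hmult : ∀ y : E d, (∑' i, (Bh ∩ D i).indicator (1 : E d → ℝ≥0∞) y)
      ≤ (M : ℝ≥0∞) * Bh.indicator (1 : E d → ℝ≥0∞) y := by
    intro y
    by_cases hyB : y ∈ Bh
    swap
    · have hz : ∀ i, (Bh ∩ D i).indicator (1 : E d → ℝ≥0∞) y = 0 := fun i =>
        Set.indicator_of_notMem (fun hmem => hyB hmem.1) _
      rw [ENNReal.tsum_eq_zero.2 hz]
      exact zero_le
    rw [Set.indicator_of_mem hyB]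
    simp only [Pi.one_apply, mul_one]
    by_cases hS : ∃ i, y ∈ D i
    swap
    · push_neg at hS
      have hz : ∀ i, (Bh ∩ D i).indicator (1 : E d → ℝ≥0∞) y = 0 := fun i =>
        Set.indicator_of_notMem (fun hmem => hS i hmem.2) _
      rw [ENNReal.tsum_eq_zero.2 hz]
      exact zero_le
    obtain ⟨i₀, hi₀⟩ := hS
    have hDdata : ∀ i, y ∈ D i → (P i).Nonempty := by
      intro i hi
      by_contra h
      have : D i = ∅ := by rw [hD]; exact if_neg h
      rw [this] at hi
      exact absurd hi (Set.notMem_empty y)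
    have hDball : ∀ i, y ∈ D i → dist y ((1-ε) • bb i + ε • pp i) ≤ ε*(2:ℝ)^i.1/8 := by
      intro i hi
      have h1 : D i = closedBall (cc i) (ε*(2:ℝ)^i.1/8) := by rw [hD]; exact if_pos (hDdata i hi)
      rw [h1, mem_closedBall] at hi
      have h2 : cc i = (1-ε) • bb i + ε • pp i := rfl
      rwa [h2] at hi
    have hfact : ∀ i, y ∈ D i →
        7/8*(ε*(2:ℝ)^i.1) ≤ rr y ∧ rr y ≤ 17/8*(ε*(2:ℝ)^i.1) := by
      intro i hi
      have hne := hDdata i hi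
      obtain ⟨hpP, hbcl, hbnorm⟩ := hpb i hne
      obtain ⟨hpA, hpint, hpr1, hpr2, hpfl⟩ := hpP
      exact piece_y_bound hKcp.isClosed hKcv hKne hε hε1 hpA.1 hbcl hbnorm
        (zpow_pos (by norm_num) _) hpr1 hpr2 (hDball i hi)
    have ht0pos : (0:ℝ) < (2:ℝ)^i₀.1 := zpow_pos (by norm_num) _
    have hscale : ∀ i, y ∈ D i → i.1 ∈ Finset.Icc (i₀.1 - 1) (i₀.1 + 1) := by
      intro i hi
      obtain ⟨ha1, ha2⟩ := hfact i hi
      obtain ⟨hb1, hb2⟩ := hfact i₀ hi₀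
      have htpos : (0:ℝ) < (2:ℝ)^i.1 := zpow_pos (by norm_num) _
      have h1 : (2:ℝ)^i.1 < (2:ℝ)^(i₀.1 + 2) := by
        rw [zpow_add₀ (by norm_num : (2:ℝ) ≠ 0)]
        have : (2:ℝ)^(2:ℤ) = 4 := by norm_num
        rw [this]
        nlinarith
      have h2 : (2:ℝ)^i₀.1 < (2:ℝ)^(i.1 + 2) := by
        rw [zpow_add₀ (by norm_num : (2:ℝ) ≠ 0)]
        have : (2:ℝ)^(2:ℤ) = 4 := by norm_num
        rw [this]
        nlinarith
      rw [zpow_lt_zpow_iff_right₀ (by norm_num : (1:ℝ) < 2)] at h1 h2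
      rw [Finset.mem_Icc]
      omega
    have htle : ∀ i, y ∈ D i → (2:ℝ)^i.1 ≤ 2*(2:ℝ)^i₀.1 ∧ (2:ℝ)^i₀.1 ≤ 2*(2:ℝ)^i.1 := by
      intro i hi
      have h3 := hscale i hi
      rw [Finset.mem_Icc] at h3
      constructor
      · have : (2:ℝ)^i.1 ≤ (2:ℝ)^(i₀.1+1) := zpow_le_zpow_right₀ (by norm_num) (by omega)
        rwa [zpow_add_one₀ (by norm_num : (2:ℝ) ≠ 0), mul_comm] at this
      · have : (2:ℝ)^i₀.1 ≤ (2:ℝ)^(i.1+1) := zpow_le_zpow_right₀ (by norm_num) (by omega)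
        rwa [zpow_add_one₀ (by norm_num : (2:ℝ) ≠ 0), mul_comm] at this
    have hclose : ∀ i, y ∈ D i → ‖pp i - pp i₀‖ ≤ 14*(2:ℝ)^i₀.1 := by
      intro i hi
      have hne := hDdata i hi
      obtain ⟨hpP, hbcl, hbnorm⟩ := hpb i hne
      obtain ⟨hpA, hpint, hpr1, hpr2, hpfl⟩ := hpP
      have hne₀ := hDdata i₀ hi₀
      obtain ⟨hpP₀, hbcl₀, hbnorm₀⟩ := hpb i₀ hne₀
      obtain ⟨hpA₀, hpint₀, hpr1₀, hpr2₀, hpfl₀⟩ := hpP₀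
      exact pieces_close hε hε' (zpow_pos (by norm_num) _) ht0pos hbnorm hbnorm₀ hpr2 hpr2₀
        (hDball i hi) (hDball i₀ hi₀) (htle i hi).1
    -- the finite set F
    set w : ℤ → Fin d → ℤ := fun k j => ⌊(pp i₀) j / δfun k⌋ with hw
    set F : Finset (ℤ × (Fin d → ℤ)) := (Finset.Icc (i₀.1 - 1) (i₀.1 + 1)).biUnion
      (fun k => Finset.map ⟨fun z => (k, z), fun a b h => (Prod.ext_iff.1 h).2⟩
        (Fintype.piFinset (fun j => Finset.Icc (w k j - 224*d) (w k j + 224*d)))) with hF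
    have hmemF : ∀ i, y ∈ D i → i ∈ F := by
      intro i hi
      have hne := hDdata i hi
      obtain ⟨hpP, hbcl, hbnorm⟩ := hpb i hne
      obtain ⟨hpA, hpint, hpr1, hpr2, hpfl⟩ := hpP
      rw [hF, Finset.mem_biUnion]
      refine ⟨i.1, hscale i hi, ?_⟩
      rw [Finset.mem_map]
      refine ⟨i.2, ?_, rfl⟩
      rw [Fintype.mem_piFinset]
      intro j
      rw [Finset.mem_Icc]
      have hnear := hclose i hi
      have hco := coord_le_norm (pp i - pp i₀) j
      have hcoval : (pp i - pp i₀) j = (pp i) j - (pp i₀) j := rfl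
      rw [hcoval] at hco
      have hδval : δfun i.1 = (2:ℝ)^i.1 / (8*(d:ℝ)) := rfl
      have hδp := hδpos i.1
      have hd' : (0:ℝ) < d := by exact_mod_cast hd
      have htt := (htle i hi).2
      have hbound : |(pp i) j - (pp i₀) j| ≤ (224*d) * δfun i.1 := by
        calc |(pp i) j - (pp i₀) j| ≤ ‖pp i - pp i₀‖ := hco
          _ ≤ 14*(2:ℝ)^i₀.1 := hnear
          _ ≤ 14*(2*(2:ℝ)^i.1) := by nlinarith
          _ = (224*(d:ℝ)) * ((2:ℝ)^i.1 / (8*(d:ℝ))) := by field_simp; ring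
          _ = (224*d) * δfun i.1 := by rw [hδval]
      rw [abs_le] at hbound
      have hql : (pp i₀) j / δfun i.1 - 224*d ≤ (pp i) j / δfun i.1 := by
        rw [div_sub' (ne_of_gt hδp), div_le_div_iff₀ hδp hδp]
        nlinarith [hbound.1]
      have hqu : (pp i) j / δfun i.1 ≤ (pp i₀) j / δfun i.1 + 224*d := by
        rw [div_add' _ _ _ (ne_of_gt hδp), div_le_div_iff₀ hδp hδp]
        nlinarith [hbound.2]
      constructor
      · rw [← hpfl j]
        have h1 : w i.1 j - 224*d = ⌊(pp i₀) j / δfun i.1 - ((224*d : ℤ) : ℝ)⌋ := by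
          rw [Int.floor_sub_intCast]
        rw [h1]
        apply Int.floor_le_floor
        push_cast
        linarith
      · rw [← hpfl j]
        have h1 : w i.1 j + 224*d = ⌊(pp i₀) j / δfun i.1 + ((224*d : ℤ) : ℝ)⌋ := by
          rw [Int.floor_add_intCast]
        rw [h1]
        apply Int.floor_le_floor
        push_cast
        linarith
    have hcard : F.card ≤ M := by
      rw [hF]
      calc ((Finset.Icc (i₀.1 - 1) (i₀.1 + 1)).biUnion _).card
          ≤ ∑ k ∈ Finset.Icc (i₀.1 - 1) (i₀.1 + 1),
            ((Finset.map ⟨fun z => (k, z), fun a b h => (Prod.ext_iff.1 h).2⟩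
              (Fintype.piFinset (fun j => Finset.Icc (w k j - 224*d) (w k j + 224*d)))).card) :=
            Finset.card_biUnion_le
        _ ≤ ∑ k ∈ Finset.Icc (i₀.1 - 1) (i₀.1 + 1), (448*d+1)^d := by
            apply Finset.sum_le_sum
            intro k _
            rw [Finset.card_map, Fintype.card_piFinset]
            have h2 : ∀ j : Fin d, (Finset.Icc (w k j - 224*d) (w k j + 224*d)).card
                = 448*d+1 := by
              intro j
              rw [Int.card_Icc]
              have : (w k j + 224*↑d + 1 - (w k j - 224*↑d)) = ((448*d+1 : ℕ) : ℤ) := by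
                push_cast
                ring
              rw [this, Int.toNat_natCast]
            rw [Finset.prod_congr rfl (fun j _ => h2 j)]
            rw [Finset.prod_const]
            simp
        _ ≤ M := by
            rw [Finset.sum_const, Int.card_Icc, hM]
            have : (i₀.1 + 1 + 1 - (i₀.1 - 1)) = ((3:ℕ) : ℤ) := by push_cast; ring
            rw [this, Int.toNat_natCast]
            simp [smul_eq_mul]
    have hzero : ∀ i ∉ F, (Bh ∩ D i).indicator (1 : E d → ℝ≥0∞) y = 0 := by
      intro i hi
      apply Set.indicator_of_notMem
      intro hmem
      exact hi (hmemF i hmem.2)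
    rw [tsum_eq_sum hzero]
    calc ∑ i ∈ F, (Bh ∩ D i).indicator (1 : E d → ℝ≥0∞) y
        ≤ ∑ _i ∈ F, (1:ℝ≥0∞) := by
          apply Finset.sum_le_sum
          intro i _
          exact Set.indicator_apply_le' (fun _ => le_rfl) (fun _ => zero_le_one)
      _ = (F.card : ℝ≥0∞) := by rw [Finset.sum_const, nsmul_eq_mul, mul_one]
      _ ≤ (M : ℝ≥0∞) := by exact_mod_cast hcard
  -- assembling
  have hAfr : volume A ≤ ∑' i, volume (P i) := by
    have h1 : A ⊆ (A ∩ interior K) ∪ frontier K := by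
      intro x hx
      by_cases h : x ∈ interior K
      · exact Or.inl ⟨hx, h⟩
      · right
        rw [hKcp.isClosed.frontier_eq]
        exact ⟨hx.1, h⟩
    calc volume A ≤ volume ((A ∩ interior K) ∪ frontier K) := measure_mono h1
      _ ≤ volume (A ∩ interior K) + volume (frontier K) := measure_union_le _ _
      _ = volume (A ∩ interior K) := by rw [hKcv.addHaar_frontier volume, add_zero]
      _ ≤ volume (⋃ i, P i) := measure_mono hcov
      _ ≤ ∑' i, volume (P i) := measure_iUnion_le _
  have hsum2 : (∑' i, ENNReal.ofReal (ε^d) * volume (P i)) ≤ (M:ℝ≥0∞) * volume B := by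
    calc (∑' i, ENNReal.ofReal (ε^d) * volume (P i))
        = ∑' i, volume ((fun x => (1-ε) • bb i + ε • x) '' P i) :=
          tsum_congr (fun i => (hvol i).symm)
      _ ≤ ∑' i, volume (Bh ∩ D i) := ENNReal.tsum_le_tsum (fun i => measure_mono (himg i))
      _ = ∑' i, ∫⁻ y, (Bh ∩ D i).indicator 1 y := by
          refine tsum_congr (fun i => ?_)
          rw [lintegral_indicator_one (hBhm.inter (hDmeas i))]
      _ = ∫⁻ y, ∑' i, (Bh ∩ D i).indicator 1 y := by
          rw [lintegral_tsum]
          intro i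
          exact (measurable_one.indicator (hBhm.inter (hDmeas i))).aemeasurable
      _ ≤ ∫⁻ y, (M:ℝ≥0∞) * Bh.indicator 1 y := lintegral_mono hmult
      _ = (M:ℝ≥0∞) * volume Bh := by
          rw [lintegral_const_mul _ (measurable_one.indicator hBhm), lintegral_indicator_one hBhm]
      _ = (M:ℝ≥0∞) * volume B := by rw [hBhvol]
  calc ENNReal.ofReal (ε^d) * volume A
      ≤ ENNReal.ofReal (ε^d) * ∑' i, volume (P i) := mul_le_mul_right hAfr _
    _ = ∑' i, ENNReal.ofReal (ε^d) * volume (P i) := ENNReal.tsum_mul_left.symm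
    _ ≤ (M:ℝ≥0∞) * volume B := hsum2


end Auxiliary

/-- For every convex body `K ⊆ ℝ^d`, `Vol K(u < 2^d) ≤ c · Vol K(u < 1)` with `c`
depending only on `d`, where `K(u < t) = {x ∈ K : Vol(K ∩ (2x − K)) < t}`. -/
theorem vol_sublevel_u_comparison (d : ℕ) (hd : 1 ≤ d) :
    ∃ c : ℝ, 0 < c ∧ ∀ (K : Set (E d)), IsCompact K → Convex ℝ K → (interior K).Nonempty →
      (volume {x ∈ K | uFun d K x < 2 ^ d}).toReal ≤
        c * (volume {x ∈ K | uFun d K x < 1}).toReal := by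
  have hMpos : (0:ℝ) < ((3 * (448*d+1)^d : ℕ) : ℝ) := by
    have : 0 < 3 * (448*d+1)^d := by positivity
    exact_mod_cast this
  have hεd : (0:ℝ) < (epsd d)^d := pow_pos epsd_pos d
  refine ⟨((3 * (448*d+1)^d : ℕ) : ℝ) / (epsd d)^d, by positivity, ?_⟩
  intro K hKcp hKcv hKint
  have hglob := globalBound hd hKcp hKcv hKint
  have hBfin : volume {x ∈ K | uFun d K x < 1} ≠ ⊤ :=
    ne_of_lt (lt_of_le_of_lt (measure_mono (sep_subset _ _)) hKcp.measure_lt_top)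
  have h1 := ENNReal.toReal_mono
    (ENNReal.mul_ne_top (ENNReal.natCast_ne_top _) hBfin) hglob
  rw [ENNReal.toReal_mul, ENNReal.toReal_mul, ENNReal.toReal_ofReal hεd.le,
    ENNReal.toReal_natCast] at h1
  rw [div_mul_eq_mul_div, le_div_iff₀ hεd]
  calc (volume {x ∈ K | uFun d K x < 2 ^ d}).toReal * epsd d ^ d
      = epsd d ^ d * (volume {x ∈ K | uFun d K x < 2 ^ d}).toReal := by ring
    _ ≤ ((3 * (448*d+1)^d : ℕ) : ℝ) * (volume {x ∈ K | uFun d K x < 1}).toReal := h1
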